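/- The companion t of b is b-sound: gfp (b ∘ t) ⊆ gfp b. -/
import Mathlib


variable {X : Type*}

/-- The greatest fixed point of a monotone function on sets: union of all post-fixed points. -/
def gfp (h : Set X → Set X) : Set X := ⋃₀ {S | S ⊆ h S}

/-- `f` progresses to `g` with respect to `b`. -/
def Progresses (b f g : Set X → Set X) : Prop := ∀ S, f (b S) ⊆ b (g S)

/-- `f` is `b`-compatible: `f` progresses to itself. -/
def Compatible (b f : Set X → Set X) : Prop := Progresses b f f

/-- The companion of `b`: pointwise join of all monotone `b`-compatible functions. -/
def companion (b : Set X → Set X) (S : Set X) : Set X :=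
  ⋃₀ {T | ∃ f : Set X → Set X, Monotone f ∧ Compatible b f ∧ T = f S}

lemma le_companion' {b f : Set X → Set X} (hf : Monotone f) (hc : Compatible b f)
    (S : Set X) : f S ⊆ companion b S :=
  fun x hx => ⟨f S, ⟨f, hf, hc, rfl⟩, hx⟩

lemma companion_mono' (b : Set X → Set X) : Monotone (companion b) := by
  intro S T hST x hx
  obtain ⟨_, ⟨f, hf, hc, rfl⟩, hx⟩ := hx
  exact ⟨f T, ⟨f, hf, hc, rfl⟩, hf hST hx⟩

lemma companion_compat' {b : Set X → Set X} (hb : Monotone b) :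
    Compatible b (companion b) := by
  intro S x hx
  obtain ⟨_, ⟨f, hf, hc, rfl⟩, hx⟩ := hx
  exact hb (le_companion' hf hc S) (hc S hx)


theorem companion_sound {X : Type*} (b : Set X → Set X) (hb : Monotone b) :
    gfp (b ∘ companion b) ⊆ gfp b := by
  intro x hx
  obtain ⟨S, hS, hxS⟩ := hx
  have hS' : S ⊆ b (companion b S) := hS
  -- t∘t is compatible
  have hcc : Compatible b (companion b ∘ companion b) := fun U =>
    Set.Subset.trans ((companion_mono' b) (companion_compat' hb U))
      (companion_compat' hb (companion b U))
  have hccmono : Monotone (companion b ∘ companion b) :=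
    (companion_mono' b).comp (companion_mono' b)
  have htt : ∀ T, companion b (companion b T) ⊆ companion b T := fun T =>
    le_companion' hccmono hcc T
  -- t S is a post-fixed point of b
  have hpost : companion b S ⊆ b (companion b S) := by
    intro y hy
    have h1 : companion b S ⊆ companion b (b (companion b S)) :=
      companion_mono' b hS'
    have h2 : companion b (b (companion b S)) ⊆ b (companion b (companion b S)) :=
      companion_compat' hb (companion b S)
    exact hb (htt S) (h2 (h1 hy))
  -- S ⊆ companion b S via id compatible
  have hid : S ⊆ companion b S :=
    le_companion' (b := b) (f := id) monotone_id (fun _ => Set.Subset.rfl) S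
  exact ⟨companion b S, hpost, hid hxS⟩
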